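/- For a GPC expansion f = ∑_𝐢 c_𝐢 Ψ_𝐢 over independent inputs, the first-order Sobol index of input X_k equals S_k = (∑_{𝐢 ∈ A_k} c_𝐢² E[Ψ_𝐢²]) / (∑_{𝐢 ≠ 0} c_𝐢² E[Ψ_𝐢²]), where A_k is the set of nonzero multi-indices 𝐢 with i_j = 0 for all j ≠ k. -/

import Mathlib

open MeasureTheory Polynomial ProbabilityTheory

/-! Write `Ψ_𝐢(ω) = ∏_l Ψ_{l,i_l}(X_l ω)`. Independence factorises every moment of these
products, so the `Ψ_𝐢` are orthogonal with `E[Ψ_𝐢] = 0` for `𝐢 ≠ 0`; hence the variance of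
`∑ c_𝐢 Ψ_𝐢` is `∑_{𝐢 ≠ 0} c_𝐢² E[Ψ_𝐢²]`. Conditioning on `X_k`, the factor `Ψ_{k,i_k}(X_k)`
pulls out and the remaining factor is independent of `X_k`, so it is replaced by its mean,
which vanishes unless `i_j = 0` for all `j ≠ k`. Thus `E[f | X_k] = ∑_{𝐢 ∈ A_k ∪ {0}} c_𝐢 Ψ_𝐢`,
and the variance formula applies again. -/

section Orthogonal

variable {Ω ι : Type*} [MeasurableSpace Ω] {μ : Measure Ω}

theorem integral_sq_sum_of_orthogonal {P : ι → Ω → ℝ} (c : ι → ℝ) (t : Finset ι)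
    (hint : ∀ i j, Integrable (fun ω => P i ω * P j ω) μ)
    (horth : ∀ i j, i ≠ j → ∫ ω, P i ω * P j ω ∂μ = 0) :
    ∫ ω, (∑ i ∈ t, c i * P i ω) ^ 2 ∂μ = ∑ i ∈ t, c i ^ 2 * ∫ ω, P i ω ^ 2 ∂μ := by
  have hexpand : ∀ ω, (∑ i ∈ t, c i * P i ω) ^ 2
      = ∑ i ∈ t, ∑ j ∈ t, c i * c j * (P i ω * P j ω) := fun ω => by
    rw [sq, Finset.sum_mul_sum]
    exact Finset.sum_congr rfl fun i _ => Finset.sum_congr rfl fun j _ => by ring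
  simp_rw [hexpand]
  rw [integral_finsetSum _ fun i _ => integrable_finsetSum _ fun j _ => (hint i j).const_mul _]
  refine Finset.sum_congr rfl fun i hi => ?_
  rw [integral_finsetSum _ fun j _ => (hint i j).const_mul _, Finset.sum_eq_single_of_mem i hi
    fun j _ hji => by rw [integral_const_mul, horth i j hji.symm, mul_zero]]
  simp_rw [integral_const_mul, ← sq]

theorem variance_sum_of_orthogonal [IsProbabilityMeasure μ] [DecidableEq ι] {P : ι → Ω → ℝ}
    {z : ι} (c : ι → ℝ) (t : Finset ι) (hmeas : ∀ i, AEStronglyMeasurable (P i) μ)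
    (hint : ∀ i j, Integrable (fun ω => P i ω * P j ω) μ)
    (horth : ∀ i j, i ≠ j → ∫ ω, P i ω * P j ω ∂μ = 0) (hz : ∀ ω, P z ω = 1) :
    variance (fun ω => ∑ i ∈ t, c i * P i ω) μ
      = ∑ i ∈ t with i ≠ z, c i ^ 2 * ∫ ω, P i ω ^ 2 ∂μ := by
  set G := fun ω => ∑ i ∈ t with i ≠ z, c i * P i ω
  have hsplit : (fun ω => ∑ i ∈ t, c i * P i ω) = fun ω => G ω + ∑ i ∈ t with i = z, c i := by
    funext ω
    rw [← Finset.sum_filter_add_sum_filter_not t (· ≠ z)]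
    simp_rw [not_not]
    refine congrArg (G ω + ·) (Finset.sum_congr rfl fun i hi => ?_)
    rw [(Finset.mem_filter.1 hi).2, hz, mul_one]
  have hGmeas : AEStronglyMeasurable G μ :=
    Finset.aestronglyMeasurable_fun_sum _ fun i _ => (hmeas i).const_mul _
  -- `P z = 1`, so orthogonality to `P z` says that the other `P i` are centred.
  have hmean : ∀ i, i ≠ z → ∫ ω, P i ω ∂μ = 0 := fun i hi => by
    simpa [hz] using horth i z hi
  have hGmean : μ[G] = 0 := by
    rw [integral_finsetSum _ fun i _ => ((hint i z).congr (.of_forall fun ω => by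
      simp [hz])).const_mul _]
    exact Finset.sum_eq_zero fun i hi => by
      rw [integral_const_mul, hmean i (Finset.mem_filter.1 hi).2, mul_zero]
  rw [hsplit, variance_add_const hGmeas, variance_eq_integral hGmeas.aemeasurable, hGmean]
  simp_rw [sub_zero]
  exact integral_sq_sum_of_orthogonal c _ hint horth

end Orthogonal

namespace ProbabilityTheory

variable {Ω ι : Type*} [MeasurableSpace Ω] {μ : Measure Ω}

theorem iIndepFun.indepFun_prod_erase [Fintype ι] [DecidableEq ι] {X : ι → Ω → ℝ}
    (hX : ∀ l, Measurable (X l)) (hindep : iIndepFun X μ) (g : ι → ℝ → ℝ)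
    (hg : ∀ l, Measurable (g l)) (k : ι) :
    IndepFun (fun ω => ∏ l ∈ Finset.univ.erase k, g l (X l ω)) (X k) μ := by
  -- Replace `g k` by `id` so that `X k` itself is one of the independent family.
  set g' := Function.update g k id
  have hg' : ∀ l, Measurable (g' l) := fun l => by
    rcases eq_or_ne l k with rfl | hl
    · simpa [g'] using measurable_id
    · simpa [g', hl] using hg l
  have h := (hindep.comp g' hg').indepFun_finsetProd_of_notMem (fun l => (hg' l).comp (hX l))
    (Finset.notMem_erase k Finset.univ)
  convert h using 1
  · funext ω
    simp only [Finset.prod_apply, Function.comp_apply]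
    exact Finset.prod_congr rfl fun l hl => by simp [g', Finset.ne_of_mem_erase hl]
  · simp [g']

theorem condExp_mul_eq_mul_integral_of_indepFun [IsFiniteMeasure μ] {β : Type*}
    [MeasurableSpace β] {Y : Ω → β} {U V : Ω → ℝ} (hY : Measurable Y)
    (hU : StronglyMeasurable[MeasurableSpace.comap Y inferInstance] U) (hV : Measurable V)
    (hVY : IndepFun V Y μ) (hUV : Integrable (U * V) μ) (hVint : Integrable V μ) :
    μ[U * V | MeasurableSpace.comap Y inferInstance] =ᵐ[μ] fun ω => U ω * μ[V] := by
  have hVcond : μ[V | MeasurableSpace.comap Y inferInstance] =ᵐ[μ] fun _ => μ[V] :=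
    condExp_indep_eq hV.comap_le hY.comap_le (Measurable.of_comap_le le_rfl).stronglyMeasurable
      ((IndepFun_iff_Indep V Y μ).mp hVY)
  filter_upwards [condExp_mul_of_stronglyMeasurable_left hU hUV hVint, hVcond] with ω h1 h2
  rw [h1, Pi.mul_apply, h2]

end ProbabilityTheory

section GPC

variable {Ω ι : Type*} [Fintype ι] {X : ι → Ω → ℝ} {Ψ : ι → ℕ → ℝ[X]}

def gpcBasis (X : ι → Ω → ℝ) (Ψ : ι → ℕ → ℝ[X]) (i : ι → ℕ) (ω : Ω) : ℝ :=
  ∏ l, (Ψ l (i l)).eval (X l ω)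

theorem gpcBasis_zero (hone : ∀ l, Ψ l 0 = 1) (ω : Ω) : gpcBasis X Ψ 0 ω = 1 := by
  simp [gpcBasis, hone]

theorem gpcBasis_mul (i j : ι → ℕ) (ω : Ω) :
    gpcBasis X Ψ i ω * gpcBasis X Ψ j ω = ∏ l, (Ψ l (i l) * Ψ l (j l)).eval (X l ω) := by
  simp [gpcBasis, Finset.prod_mul_distrib]

theorem gpcBasis_update_zero [DecidableEq ι] (hone : ∀ l, Ψ l 0 = 1) (i : ι → ℕ) (k : ι)
    (ω : Ω) :
    gpcBasis X Ψ (Function.update i k 0) ω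
      = ∏ l ∈ Finset.univ.erase k, (Ψ l (i l)).eval (X l ω) := by
  rw [gpcBasis, ← Finset.mul_prod_erase _ _ (Finset.mem_univ k)]
  simp only [Function.update_self, hone, eval_one, one_mul]
  exact Finset.prod_congr rfl fun l hl => by
    rw [Function.update_of_ne (Finset.ne_of_mem_erase hl)]

theorem gpcBasis_eq_eval_mul_update [DecidableEq ι] (hone : ∀ l, Ψ l 0 = 1) (i : ι → ℕ) (k : ι)
    (ω : Ω) :
    gpcBasis X Ψ i ω = (Ψ k (i k)).eval (X k ω) * gpcBasis X Ψ (Function.update i k 0) ω := by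
  rw [gpcBasis_update_zero hone, gpcBasis]
  exact (Finset.mul_prod_erase _ (fun l => (Ψ l (i l)).eval (X l ω)) (Finset.mem_univ k)).symm

variable [MeasurableSpace Ω] {μ : Measure Ω}

theorem measurable_gpcBasis (hX : ∀ l, Measurable (X l)) (i : ι → ℕ) :
    Measurable (gpcBasis X Ψ i) :=
  Finset.measurable_prod _ fun l _ => (Ψ l (i l)).continuous.measurable.comp (hX l)

theorem integrable_gpcBasis_mul
    (hmom : ∀ q : ι → ℝ[X], Integrable (fun ω => ∏ l, (q l).eval (X l ω)) μ) (i j : ι → ℕ) :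
    Integrable (fun ω => gpcBasis X Ψ i ω * gpcBasis X Ψ j ω) μ := by
  simpa only [gpcBasis_mul] using hmom fun l => Ψ l (i l) * Ψ l (j l)

theorem integral_prod_eval (hX : ∀ l, Measurable (X l)) (hindep : iIndepFun X μ)
    (q : ι → ℝ[X]) :
    ∫ ω, ∏ l, (q l).eval (X l ω) ∂μ = ∏ l, ∫ ω, (q l).eval (X l ω) ∂μ :=
  hindep.integral_fun_prod_comp (fun l => (hX l).aemeasurable)
    fun l => (q l).continuous.aestronglyMeasurable

theorem integral_gpcBasis [IsProbabilityMeasure μ] [DecidableEq ι] (hX : ∀ l, Measurable (X l))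
    (hindep : iIndepFun X μ) (hone : ∀ l, Ψ l 0 = 1)
    (horth : ∀ l n m, n ≠ m → ∫ ω, (Ψ l n).eval (X l ω) * (Ψ l m).eval (X l ω) ∂μ = 0)
    (i : ι → ℕ) : ∫ ω, gpcBasis X Ψ i ω ∂μ = if i = 0 then 1 else 0 := by
  split_ifs with hi
  · simp [hi, gpcBasis_zero hone]
  · obtain ⟨l, hl⟩ := Function.ne_iff.mp hi
    simp only [gpcBasis]
    rw [integral_prod_eval hX hindep]
    exact Finset.prod_eq_zero (Finset.mem_univ l) (by simpa [hone] using horth l (i l) 0 hl)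

theorem integral_gpcBasis_mul_of_ne (hX : ∀ l, Measurable (X l)) (hindep : iIndepFun X μ)
    (horth : ∀ l n m, n ≠ m → ∫ ω, (Ψ l n).eval (X l ω) * (Ψ l m).eval (X l ω) ∂μ = 0)
    {i j : ι → ℕ} (hij : i ≠ j) : ∫ ω, gpcBasis X Ψ i ω * gpcBasis X Ψ j ω ∂μ = 0 := by
  obtain ⟨l, hl⟩ := Function.ne_iff.mp hij
  simp_rw [gpcBasis_mul, integral_prod_eval hX hindep]
  exact Finset.prod_eq_zero (Finset.mem_univ l) (by simpa using horth l _ _ hl)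

theorem condExp_gpcBasis [IsProbabilityMeasure μ] [DecidableEq ι] (hX : ∀ l, Measurable (X l))
    (hindep : iIndepFun X μ) (hone : ∀ l, Ψ l 0 = 1)
    (hmom : ∀ q : ι → ℝ[X], Integrable (fun ω => ∏ l, (q l).eval (X l ω)) μ)
    (horth : ∀ l n m, n ≠ m → ∫ ω, (Ψ l n).eval (X l ω) * (Ψ l m).eval (X l ω) ∂μ = 0)
    (i : ι → ℕ) (k : ι) :
    μ[gpcBasis X Ψ i | MeasurableSpace.comap (X k) inferInstance]
      =ᵐ[μ] fun ω => if ∀ j, j ≠ k → i j = 0 then gpcBasis X Ψ i ω else 0 := by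
  set V := gpcBasis X Ψ (Function.update i k 0)
  have hsplit : gpcBasis X Ψ i = (fun ω => (Ψ k (i k)).eval (X k ω)) * V :=
    funext (gpcBasis_eq_eval_mul_update hone i k)
  have hU : StronglyMeasurable[MeasurableSpace.comap (X k) inferInstance]
      fun ω => (Ψ k (i k)).eval (X k ω) :=
    ((Ψ k (i k)).continuous.measurable.comp (Measurable.of_comap_le le_rfl)).stronglyMeasurable
  have hV : IndepFun V (X k) μ := by
    have h := hindep.indepFun_prod_erase hX (fun l x => (Ψ l (i l)).eval x)
      (fun l => (Ψ l (i l)).continuous.measurable) k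
    simpa only [← gpcBasis_update_zero hone] using h
  have hupdate : Function.update i k 0 = 0 ↔ ∀ j, j ≠ k → i j = 0 := by
    simp [Function.update_eq_iff]
  rw [hsplit]
  refine (condExp_mul_eq_mul_integral_of_indepFun (hX k) hU (measurable_gpcBasis hX _) hV
    (hsplit ▸ hmom _) (hmom _)).trans (.of_forall fun ω => ?_)
  simp only [Pi.mul_apply, V, integral_gpcBasis hX hindep hone horth]
  by_cases h : ∀ j, j ≠ k → i j = 0
  · rw [if_pos (hupdate.mpr h), if_pos h, hupdate.mpr h, gpcBasis_zero hone]
  · rw [if_neg (mt hupdate.mp h), if_neg h, mul_zero]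

theorem condExp_sum_gpcBasis [IsProbabilityMeasure μ] [DecidableEq ι]
    (hX : ∀ l, Measurable (X l)) (hindep : iIndepFun X μ) (hone : ∀ l, Ψ l 0 = 1)
    (hmom : ∀ q : ι → ℝ[X], Integrable (fun ω => ∏ l, (q l).eval (X l ω)) μ)
    (horth : ∀ l n m, n ≠ m → ∫ ω, (Ψ l n).eval (X l ω) * (Ψ l m).eval (X l ω) ∂μ = 0)
    (s : Finset (ι → ℕ)) (c : (ι → ℕ) → ℝ) (k : ι) :
    μ[fun ω => ∑ i ∈ s, c i * gpcBasis X Ψ i ω | MeasurableSpace.comap (X k) inferInstance]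
      =ᵐ[μ] fun ω => ∑ i ∈ s with ∀ j, j ≠ k → i j = 0, c i * gpcBasis X Ψ i ω := by
  have hsum : (fun ω => ∑ i ∈ s, c i * gpcBasis X Ψ i ω) = ∑ i ∈ s, c i • gpcBasis X Ψ i := by
    funext ω
    simp [Finset.sum_apply]
  rw [hsum]
  refine (condExp_finsetSum (fun i _ => (hmom _).smul (c i)) _).trans ?_
  refine (eventuallyEq_sum fun i _ => (condExp_smul (c i) _ _).trans
    ((condExp_gpcBasis hX hindep hone hmom horth i k).const_smul (c i))).trans
    (.of_forall fun ω => ?_)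
  simp [Finset.sum_apply, Finset.sum_filter, mul_ite]

theorem variance_sum_gpcBasis [IsProbabilityMeasure μ] [DecidableEq ι]
    (hX : ∀ l, Measurable (X l)) (hindep : iIndepFun X μ) (hone : ∀ l, Ψ l 0 = 1)
    (hmom : ∀ q : ι → ℝ[X], Integrable (fun ω => ∏ l, (q l).eval (X l ω)) μ)
    (horth : ∀ l n m, n ≠ m → ∫ ω, (Ψ l n).eval (X l ω) * (Ψ l m).eval (X l ω) ∂μ = 0)
    (t : Finset (ι → ℕ)) (c : (ι → ℕ) → ℝ) :
    variance (fun ω => ∑ i ∈ t, c i * gpcBasis X Ψ i ω) μ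
      = ∑ i ∈ t with i ≠ 0, c i ^ 2 * ∫ ω, gpcBasis X Ψ i ω ^ 2 ∂μ :=
  variance_sum_of_orthogonal c t (fun i => (measurable_gpcBasis hX i).aestronglyMeasurable)
    (integrable_gpcBasis_mul hmom) (fun _ _ => integral_gpcBasis_mul_of_ne hX hindep horth)
    (gpcBasis_zero hone)

end GPC

open scoped Classical in
theorem stmt16_general {Ω : Type*} [MeasurableSpace Ω] (μ : Measure Ω)
    [IsProbabilityMeasure μ] (d : ℕ) (X : Fin d → Ω → ℝ)
    (hX : ∀ k, Measurable (X k))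
    (hindep : iIndepFun X μ)
    (Ψ : Fin d → ℕ → ℝ[X]) (hone : ∀ k, Ψ k 0 = 1)
    (hmom : ∀ q : Fin d → ℝ[X],
      Integrable (fun ω => ∏ k, (q k).eval (X k ω)) μ)
    (horth : ∀ k n m, n ≠ m →
      ∫ ω, (Ψ k n).eval (X k ω) * (Ψ k m).eval (X k ω) ∂μ = 0)
    (s : Finset (Fin d → ℕ)) (c : (Fin d → ℕ) → ℝ)
    (f : Ω → ℝ)
    (hfdef : ∀ ω, f ω = ∑ i ∈ s, c i * ∏ k, (Ψ k (i k)).eval (X k ω))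
    (k : Fin d) :
    variance (μ[f | MeasurableSpace.comap (X k) inferInstance]) μ /
        variance f μ =
      (∑ i ∈ s.filter (fun i => i ≠ (fun _ => 0) ∧ ∀ j, j ≠ k → i j = 0),
          (c i) ^ 2 * ∫ ω, (∏ l, (Ψ l (i l)).eval (X l ω)) ^ 2 ∂μ) /
      (∑ i ∈ s.filter (fun i => i ≠ fun _ => 0),
          (c i) ^ 2 * ∫ ω, (∏ l, (Ψ l (i l)).eval (X l ω)) ^ 2 ∂μ) := by
  obtain rfl : f = fun ω => ∑ i ∈ s, c i * gpcBasis X Ψ i ω := funext hfdef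
  rw [variance_congr (condExp_sum_gpcBasis hX hindep hone hmom horth s c k),
    variance_sum_gpcBasis hX hindep hone hmom horth,
    variance_sum_gpcBasis hX hindep hone hmom horth, Finset.filter_filter]
  congr 1
  exact Finset.sum_congr (by ext; simp only [Finset.mem_filter, Pi.zero_def, and_comm])
    fun _ _ => rfl

open scoped Classical in
/-- For a finite GPC expansion `f = ∑_{𝐢 ∈ s} c_𝐢 Ψ_𝐢` over independent
inputs (tensor-product orthogonal polynomials with `Ψ_0 = 1`), the first-order
Sobol index of input `X k` equals
`S_k = (∑_{𝐢 ∈ A_k} c_𝐢² E[Ψ_𝐢²]) / (∑_{𝐢 ≠ 0} c_𝐢² E[Ψ_𝐢²])`,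
where `A_k` is the set of nonzero multi-indices `𝐢` with `i j = 0` for all
`j ≠ k`. -/
theorem stmt16 {Ω : Type*} [MeasurableSpace Ω] (μ : Measure Ω)
    [IsProbabilityMeasure μ] (d : ℕ) (X : Fin d → Ω → ℝ)
    (hX : ∀ k, Measurable (X k))
    (hindep : iIndepFun X μ)
    (Ψ : Fin d → ℕ → ℝ[X]) (hone : ∀ k, Ψ k 0 = 1)
    (hmom : ∀ q : Fin d → ℝ[X],
      Integrable (fun ω => ∏ k, (q k).eval (X k ω)) μ)
    (horth : ∀ k n m, n ≠ m →
      ∫ ω, (Ψ k n).eval (X k ω) * (Ψ k m).eval (X k ω) ∂μ = 0)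
    (hnorm : ∀ (i : Fin d → ℕ),
      0 < ∫ ω, (∏ k, (Ψ k (i k)).eval (X k ω)) ^ 2 ∂μ)
    (s : Finset (Fin d → ℕ)) (c : (Fin d → ℕ) → ℝ)
    (f : Ω → ℝ)
    (hfdef : ∀ ω, f ω = ∑ i ∈ s, c i * ∏ k, (Ψ k (i k)).eval (X k ω))
    (hvar : 0 < variance f μ) (k : Fin d) :
    variance (μ[f | MeasurableSpace.comap (X k) inferInstance]) μ /
        variance f μ =
      (∑ i ∈ s.filter (fun i => i ≠ (fun _ => 0) ∧ ∀ j, j ≠ k → i j = 0),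
          (c i) ^ 2 * ∫ ω, (∏ l, (Ψ l (i l)).eval (X l ω)) ^ 2 ∂μ) /
      (∑ i ∈ s.filter (fun i => i ≠ fun _ => 0),
          (c i) ^ 2 * ∫ ω, (∏ l, (Ψ l (i l)).eval (X l ω)) ^ 2 ∂μ) :=
  stmt16_general μ d X hX hindep Ψ hone hmom horth s c f hfdef k
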